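/- arXiv:1704.07104 — 5 statements merged into one kernel-verified Lean document; each statement's English description precedes it below -/
import Mathlib

section
/- The number of permutations of length n avoiding the classical pattern 231 equals the n-th Catalan number. -/
/-!
Let `m` be the position of the largest value of a 231-avoiding permutation. Every entry left of
`m` is smaller than every entry right of `m`, for otherwise these two entries together with the
maximum form a 231. Hence the permutation is a 231-avoiding permutation of the `m` smallest
values, then the maximum, then a 231-avoiding permutation of the remaining `n - m` values, and
conversely every such concatenation avoids 231. Since avoidance only depends on the relative order
of positions and of values, both blocks are counted by the induction hypothesis, and summing over
`m` gives the Catalan recursion.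
-/

/-- `π` avoids the classical pattern 231. -/
def Avoids231 {n : ℕ} (π : Equiv.Perm (Fin n)) : Prop :=
  ¬ ∃ i j k : Fin n, i < j ∧ j < k ∧ π k < π i ∧ π i < π j

open Equiv

def AvoidsPattern231 {α β : Type*} [LT α] [LT β] (f : α → β) : Prop :=
  ¬ ∃ i j k, i < j ∧ j < k ∧ f k < f i ∧ f i < f j

section OrderInvariance

variable {α β α' β' : Type*}

theorem AvoidsPattern231.of_comp_eq_comp [Preorder α] [Preorder β] [Preorder α'] [Preorder β']
    {f : α → β} {g : α' → β'} {i : α' → α} {j : β' → β} (hf : AvoidsPattern231 f)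
    (hi : StrictMono i) (hj : StrictMono j) (h : ∀ x, f (i x) = j (g x)) :
    AvoidsPattern231 g := by
  rintro ⟨a, b, c, hab, hbc, hca, hab'⟩
  exact hf ⟨i a, i b, i c, hi hab, hi hbc, by simpa only [h] using hj hca,
    by simpa only [h] using hj hab'⟩

theorem avoidsPattern231_orderIso_comp_iff [Preorder α] [Preorder β] [Preorder α'] [Preorder β']
    (e₁ : α' ≃o α) (e₂ : β ≃o β') {f : α → β} :
    AvoidsPattern231 (e₂ ∘ f ∘ e₁) ↔ AvoidsPattern231 f :=
  ⟨fun h => h.of_comp_eq_comp e₁.symm.strictMono e₂.strictMono (by simp),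
    fun h => h.of_comp_eq_comp e₁.strictMono e₂.symm.strictMono (by simp)⟩

theorem card_avoidsPattern231_congr [Preorder α] [Preorder β] [Preorder α'] [Preorder β']
    (e₁ : α ≃o α') (e₂ : β ≃o β') :
    Nat.card {e : α ≃ β // AvoidsPattern231 e}
      = Nat.card {e : α' ≃ β' // AvoidsPattern231 e} :=
  Nat.card_congr <| (e₁.toEquiv.equivCongr e₂.toEquiv).subtypeEquiv fun _ =>
    (avoidsPattern231_orderIso_comp_iff e₁.symm e₂).symm

theorem card_avoidsPattern231_eq_of_card_eq [LinearOrder α] [LinearOrder β] [Fintype α]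
    [Fintype β] {k : ℕ} (hα : Fintype.card α = k) (hβ : Fintype.card β = k) :
    Nat.card {e : α ≃ β // AvoidsPattern231 e} = Nat.card {π : Perm (Fin k) // Avoids231 π} :=
  card_avoidsPattern231_congr (Fintype.orderIsoFinOfCardEq α hα).symm
    (Fintype.orderIsoFinOfCardEq β hβ).symm

end OrderInvariance

section RemovePoint

variable {α β : Type*}

def Equiv.subtypeNeEquiv [DecidableEq α] [DecidableEq β] (a : α) (b : β) :
    {e : α ≃ β // e a = b} ≃ ({x // x ≠ a} ≃ {y // y ≠ b}) where
  toFun e := e.1.subtypeEquiv fun _ => (e.1.injective.ne_iff' e.2).symm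
  invFun e :=
    ⟨(optionSubtypeNe a).symm.trans (e.optionCongr.trans (optionSubtypeNe b)), by simp⟩
  left_inv e := by
    ext x
    by_cases hx : x = a
    · simp [hx, e.2]
    · simp [optionSubtypeNe_symm_of_ne hx]
  right_inv e := by
    ext x
    simp [optionSubtypeNe_symm_of_ne x.2]

theorem avoidsPattern231_iff_subtypeNeEquiv [LinearOrder α] [LinearOrder β] {a : α} {b : β}
    (ha : IsBot a) (hb : IsTop b) (e : {e : α ≃ β // e a = b}) :
    AvoidsPattern231 e.1 ↔ AvoidsPattern231 (subtypeNeEquiv a b e) := by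
  refine ⟨fun h => h.of_comp_eq_comp (Subtype.strictMono_coe _) (Subtype.strictMono_coe _)
    fun _ => rfl, fun h => ?_⟩
  rintro ⟨i, j, k, hij, hjk, hki, hij'⟩
  have hi : i ≠ a := by rintro rfl; exact not_lt_of_ge (hb _) (e.2 ▸ hij')
  have hj : j ≠ a := by rintro rfl; exact not_lt_of_ge (ha i) hij
  have hk : k ≠ a := by rintro rfl; exact not_lt_of_ge (ha j) hjk
  exact h ⟨⟨i, hi⟩, ⟨j, hj⟩, ⟨k, hk⟩, hij, hjk, hki, hij'⟩

theorem card_avoidsPattern231_apply_eq_of_isBot_of_isTop [LinearOrder α] [LinearOrder β]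
    {a : α} {b : β} (ha : IsBot a) (hb : IsTop b) :
    Nat.card {e : α ≃ β // AvoidsPattern231 e ∧ e a = b}
      = Nat.card {e : {x // x ≠ a} ≃ {y // y ≠ b} // AvoidsPattern231 e} := by
  classical
  calc Nat.card {e : α ≃ β // AvoidsPattern231 e ∧ e a = b}
      = Nat.card {e : {e : α ≃ β // e a = b} // AvoidsPattern231 e.1} :=
        Nat.card_congr ((subtypeSubtypeEquivSubtypeInter (fun e : α ≃ β => e a = b) _).trans
          (subtypeEquivRight fun _ => and_comm)).symm
    _ = _ := Nat.card_congr <| (subtypeNeEquiv a b).subtypeEquiv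
        (avoidsPattern231_iff_subtypeNeEquiv ha hb)

end RemovePoint

section LowerSetSplit

variable {α : Type*}

def Equiv.Perm.subtypePermProdEquiv (p : α → Prop) [DecidablePred p] :
    {σ : Perm α // ∀ x, p (σ x) ↔ p x} ≃ Perm {x // p x} × Perm {x // ¬ p x} where
  toFun σ := (σ.1.subtypePerm σ.2, σ.1.subtypePerm fun x => (σ.2 x).not)
  invFun τ := ⟨τ.1.subtypeCongr τ.2, fun x => by
    by_cases hx : p x
    · simpa [Perm.subtypeCongr.left_apply _ _ hx, hx] using (τ.1 ⟨x, hx⟩).2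
    · simpa [Perm.subtypeCongr.right_apply _ _ hx, hx] using (τ.2 ⟨x, hx⟩).2⟩
  left_inv σ := by
    ext x
    by_cases hx : p x
    · simp [Perm.subtypeCongr.left_apply _ _ hx]
    · simp [Perm.subtypeCongr.right_apply _ _ hx]
  right_inv τ := by
    ext x
    · simp [Perm.subtypeCongr.left_apply _ _ x.2]
    · simp [Perm.subtypeCongr.right_apply _ _ x.2]

theorem avoidsPattern231_iff_of_isLowerSet [LinearOrder α] {p : α → Prop} [DecidablePred p]
    (hp : IsLowerSet {x | p x}) (σ : {σ : Perm α // ∀ x, p (σ x) ↔ p x}) :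
    AvoidsPattern231 σ.1 ↔ AvoidsPattern231 (Perm.subtypePermProdEquiv p σ).1
      ∧ AvoidsPattern231 (Perm.subtypePermProdEquiv p σ).2 := by
  refine ⟨fun h => ⟨h.of_comp_eq_comp (Subtype.strictMono_coe _) (Subtype.strictMono_coe _)
    fun _ => rfl, h.of_comp_eq_comp (Subtype.strictMono_coe _) (Subtype.strictMono_coe _)
    fun _ => rfl⟩, fun ⟨hL, hR⟩ => ?_⟩
  rintro ⟨i, j, k, hij, hjk, hki, hij'⟩
  by_cases hi : p i
  · have hk : p k := by
      by_contra hk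
      exact ((σ.2 k).not.2 hk) (hp hki.le ((σ.2 i).2 hi))
    have hj : p j := hp hjk.le hk
    exact hL ⟨⟨i, hi⟩, ⟨j, hj⟩, ⟨k, hk⟩, hij, hjk, hki, hij'⟩
  · have hj : ¬ p j := fun hj => hi (hp hij.le hj)
    have hk : ¬ p k := fun hk => hj (hp hjk.le hk)
    exact hR ⟨⟨i, hi⟩, ⟨j, hj⟩, ⟨k, hk⟩, hij, hjk, hki, hij'⟩

/-- The image `σ '' Iio m` is a lower set: a smaller value placed right of `m` would complete a
231 with the maximum at `m`. Lower sets of a linear order are nested, so it is `Iio m`. -/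
theorem AvoidsPattern231.apply_lt_iff_of_isTop [LinearOrder α] [Finite α] {σ : Perm α}
    (hσ : AvoidsPattern231 σ) {m : α} (hm : IsTop (σ m)) (x : α) : σ x < m ↔ x < m := by
  have hlower : IsLowerSet (σ '' Set.Iio m) := by
    rintro _ z hzy ⟨a, ha, rfl⟩
    obtain ⟨c, rfl⟩ := σ.surjective z
    have hlt : σ a < σ m := (hm (σ a)).lt_of_ne (σ.injective.ne ha.ne)
    refine ⟨c, ?_, rfl⟩
    rcases lt_trichotomy c m with hc | rfl | hc
    · exact hc
    · exact absurd hzy (not_le_of_gt hlt)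
    · exact absurd ⟨a, m, c, ha, hc, hzy.lt_of_ne (σ.injective.ne (ha.trans hc).ne'), hlt⟩ hσ
  have hcard : (σ '' Set.Iio m).ncard = (Set.Iio m).ncard :=
    Set.ncard_image_of_injective _ σ.injective
  have hS : σ '' Set.Iio m = Set.Iio m := by
    rcases hlower.total (isLowerSet_Iio m) with h | h
    · exact Set.eq_of_subset_of_ncard_le h hcard.ge (Set.toFinite _)
    · exact (Set.eq_of_subset_of_ncard_le h hcard.le (Set.toFinite _)).symm
  rw [← Set.mem_Iio, ← hS, σ.injective.mem_set_image, Set.mem_Iio]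

theorem card_avoidsPattern231_apply_eq_of_isTop [LinearOrder α] [Finite α] {m t : α}
    (ht : IsTop t) :
    Nat.card {σ : Perm α // AvoidsPattern231 σ ∧ σ m = t}
      = Nat.card {σ : Perm {x // x < m} // AvoidsPattern231 σ}
        * Nat.card {σ : Perm {x // ¬ x < m} //
            AvoidsPattern231 σ ∧ σ ⟨m, lt_irrefl m⟩ = ⟨t, ht.isMax.not_lt⟩} := by
  classical
  calc Nat.card {σ : Perm α // AvoidsPattern231 σ ∧ σ m = t}
      = Nat.card {σ : {σ : Perm α // ∀ x, σ x < m ↔ x < m} //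
          AvoidsPattern231 σ.1 ∧ σ.1 m = t} :=
        Nat.card_congr (subtypeSubtypeEquivSubtype fun h =>
          h.1.apply_lt_iff_of_isTop (h.2 ▸ ht)).symm
    _ = Nat.card {τ : Perm {x // x < m} × Perm {x // ¬ x < m} // AvoidsPattern231 τ.1 ∧
          AvoidsPattern231 τ.2 ∧ τ.2 ⟨m, lt_irrefl m⟩ = ⟨t, ht.isMax.not_lt⟩} :=
        Nat.card_congr <| (Perm.subtypePermProdEquiv (· < m)).subtypeEquiv fun σ => by
          rw [avoidsPattern231_iff_of_isLowerSet (isLowerSet_Iio m), and_assoc, Subtype.ext_iff]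
          rfl
    _ = _ := by
      rw [← Nat.card_prod]
      exact Nat.card_congr <| subtypeProdEquivProd
        (p := fun σ : Perm {x // x < m} => AvoidsPattern231 σ)
        (q := fun σ : Perm {x // ¬ x < m} =>
          AvoidsPattern231 σ ∧ σ ⟨m, lt_irrefl m⟩ = ⟨t, ht.isMax.not_lt⟩)

end LowerSetSplit

theorem card_perm_eq_sum_card_apply_eq {α : Type*} [Fintype α] (P : Perm α → Prop) (t : α) :
    Nat.card {σ : Perm α // P σ} = ∑ m, Nat.card {σ : Perm α // P σ ∧ σ m = t} := by
  rw [← Nat.card_sigma]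
  exact Nat.card_congr <| (sigmaFiberEquiv fun σ : {σ // P σ} => σ.1.symm t).symm.trans <|
    sigmaCongrRight fun m => (subtypeSubtypeEquivSubtypeInter P (fun σ => σ.symm t = m)).trans <|
      subtypeEquivRight fun σ => by rw [symm_apply_eq, eq_comm]

theorem card_avoids231_zero : Nat.card {π : Perm (Fin 0) // Avoids231 π} = 1 :=
  Nat.card_eq_one_iff_unique.2 ⟨inferInstance, ⟨⟨1, fun ⟨i, _⟩ => i.elim0⟩⟩⟩

theorem card_avoids231_succ (n : ℕ) :
    Nat.card {π : Perm (Fin (n + 1)) // Avoids231 π}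
      = ∑ m : Fin (n + 1), Nat.card {π : Perm (Fin m) // Avoids231 π}
          * Nat.card {π : Perm (Fin (n - m)) // Avoids231 π} := by
  refine (card_perm_eq_sum_card_apply_eq (AvoidsPattern231 ⇑·) (Fin.last n)).trans <|
    Finset.sum_congr rfl fun m _ => ?_
  have hL : Fintype.card {x : Fin (n + 1) // x < m} = m := by
    rw [Fintype.card_subtype, Finset.filter_gt_eq_Iio, Fin.card_Iio]
  have hR (y) : Fintype.card {x : {x : Fin (n + 1) // ¬ x < m} // x ≠ y} = n - m := by
    simp only [ne_eq, Fintype.card_subtype_compl, Fintype.card_unique, hL, Fintype.card_fin]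
    omega
  rw [card_avoidsPattern231_apply_eq_of_isTop Fin.le_last,
    card_avoidsPattern231_apply_eq_of_isBot_of_isTop (fun x => not_lt.1 x.2)
      (fun x => Fin.le_last x.1),
    card_avoidsPattern231_eq_of_card_eq hL hL, card_avoidsPattern231_eq_of_card_eq (hR _) (hR _)]

/-- The number of 231-avoiding permutations of length `n` is the `n`-th
Catalan number. -/
theorem card_avoids231_eq_catalan (n : ℕ) :
    Nat.card {π : Equiv.Perm (Fin n) // Avoids231 π} = catalan n := by
  induction n using Nat.strong_induction_on with
  | _ n ih =>
    rcases n with _ | n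
    · exact card_avoids231_zero.trans catalan_zero.symm
    · rw [card_avoids231_succ, catalan_succ]
      exact Finset.sum_congr rfl fun m _ => by rw [ih m (by omega), ih (n - m) (by omega)]
end

section
/- (First Dominating Pattern Rule) Let m₁ = (σ, R₁) and m₂ = (σ, R₂) be mesh patterns and π a classical pattern with |π| ≤ |σ| + 1. If R₂ = R₁ ∪ {⟨a,b⟩} and the classical pattern σ^{⟨a,b⟩} obtained by inserting a point into box ⟨a,b⟩ of σ contains π, then a permutation avoids {π, m₁} if and only if it avoids {π, m₂}. -/
/-!
Since `R₁ ⊆ R₂`, every occurrence of `m₂` is one of `m₁`. Conversely, an occurrence of `σ`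
that witnesses `m₁` but not `m₂` has a point of `ω` in box `⟨a,b⟩`; adding that point to the
occurrence yields an occurrence of `σ^⟨a,b⟩`, hence of `π`. So a permutation avoiding `π`
contains `m₁` if and only if it contains `m₂`.
-/

def extFun {k n : ℕ} (α : Fin k → Fin n) : ℕ → ℕ := fun i =>
  if h0 : i = 0 then 0
  else if h1 : i ≤ k then ((α ⟨i - 1, by omega⟩ : Fin n) : ℕ) + 1
  else n + 1

/-- An occurrence of the mesh pattern `(τ, R)` in `π` given by index/value
injections `α`, `β` (using 1-indexed coordinates for the regions). -/
def MeshOcc {k n : ℕ} (τ : Equiv.Perm (Fin k)) (R : Finset (ℕ × ℕ))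
    (π : Equiv.Perm (Fin n)) (α β : Fin k → Fin n) : Prop :=
  StrictMono α ∧ StrictMono β ∧ (∀ i, π (α i) = β (τ i)) ∧
    ∀ p ∈ R, ∀ x : Fin n,
      ¬(extFun α p.1 < (x : ℕ) + 1 ∧ (x : ℕ) + 1 < extFun α (p.1 + 1) ∧
        extFun β p.2 < (π x : ℕ) + 1 ∧ (π x : ℕ) + 1 < extFun β (p.2 + 1))

def ContainsMesh {k n : ℕ} (τ : Equiv.Perm (Fin k)) (R : Finset (ℕ × ℕ))
    (π : Equiv.Perm (Fin n)) : Prop :=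
  ∃ α β : Fin k → Fin n, MeshOcc τ R π α β

def AvoidsMesh {k n : ℕ} (τ : Equiv.Perm (Fin k)) (R : Finset (ℕ × ℕ))
    (π : Equiv.Perm (Fin n)) : Prop :=
  ¬ ContainsMesh τ R π

/-- The classical pattern `τ` is contained in `f`. -/
def ContainsPat {k n : ℕ} (τ : Fin k → Fin k) (f : Fin n → Fin n) : Prop :=
  ∃ α : Fin k → Fin n, StrictMono α ∧ ∀ i j : Fin k, τ i < τ j ↔ f (α i) < f (α j)

/-- The permutation `σ^⟨a,b⟩` of length `m+1` obtained by inserting a point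
into the box `⟨a,b⟩` of `σ` (0-indexed boxes). -/
def insertPoint {m : ℕ} (σ : Equiv.Perm (Fin m)) (a b : Fin (m + 1)) :
    Fin (m + 1) → Fin (m + 1) := fun x =>
  if h0 : (x : ℕ) = a then b
  else if h1 : (x : ℕ) < a then
    have hx : (x : ℕ) < m := by have := a.isLt; omega
    if (σ ⟨x, hx⟩ : ℕ) < b then ⟨σ ⟨x, hx⟩, by have := (σ ⟨x, hx⟩).isLt; omega⟩
    else ⟨(σ ⟨x, hx⟩ : ℕ) + 1, by have := (σ ⟨x, hx⟩).isLt; omega⟩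
  else
    have hx : (x : ℕ) - 1 < m := by have := x.isLt; omega
    if (σ ⟨(x : ℕ) - 1, hx⟩ : ℕ) < b then
      ⟨σ ⟨(x : ℕ) - 1, hx⟩, by have := (σ ⟨(x : ℕ) - 1, hx⟩).isLt; omega⟩
    else ⟨(σ ⟨(x : ℕ) - 1, hx⟩ : ℕ) + 1, by have := (σ ⟨(x : ℕ) - 1, hx⟩).isLt; omega⟩


lemma ContainsPat.trans {k m n : ℕ} {τ : Fin k → Fin k} {f : Fin m → Fin m}
    {g : Fin n → Fin n} (hτ : ContainsPat τ f) (hf : ContainsPat f g) : ContainsPat τ g := by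
  obtain ⟨α, hα, hτα⟩ := hτ
  obtain ⟨γ, hγ, hfγ⟩ := hf
  exact ⟨γ ∘ α, hγ.comp hα, fun i j => (hτα i j).trans (hfγ _ _)⟩

lemma ContainsMesh.mono {k n : ℕ} {τ : Equiv.Perm (Fin k)} {R R' : Finset (ℕ × ℕ)}
    {ω : Equiv.Perm (Fin n)} (hRR' : R ⊆ R') (h : ContainsMesh τ R' ω) :
    ContainsMesh τ R ω := by
  obtain ⟨α, β, hα, hβ, hαβ, hempty⟩ := h
  exact ⟨α, β, hα, hβ, hαβ, fun p hp => hempty p (hRR' hp)⟩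

lemma Fin.val_succAbove_eq_ite {n : ℕ} (p : Fin (n + 1)) (i : Fin n) :
    (p.succAbove i : ℕ) = if (i : ℕ) < p then (i : ℕ) else (i : ℕ) + 1 := by
  unfold Fin.succAbove
  split_ifs <;> simp_all [Fin.lt_def]

section insertPoint

variable {m : ℕ} (σ : Equiv.Perm (Fin m)) (a b : Fin (m + 1))

@[simp]
lemma insertPoint_self : insertPoint σ a b a = b := by
  simp [insertPoint]

@[simp]
lemma insertPoint_succAbove (i : Fin m) :
    insertPoint σ a b (a.succAbove i) = b.succAbove (σ i) := by
  ext
  rcases lt_or_ge (i : ℕ) a with h | h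
  · have hi : ((a.succAbove i : Fin (m + 1)) : ℕ) = i := by
      rw [Fin.val_succAbove_eq_ite, if_pos h]
    simp only [insertPoint, hi, dif_neg h.ne, dif_pos h, Fin.val_succAbove_eq_ite, Fin.eta]
    split_ifs <;> rfl
  · have hi : ((a.succAbove i : Fin (m + 1)) : ℕ) = i + 1 := by
      rw [Fin.val_succAbove_eq_ite, if_neg h.not_gt]
    simp only [insertPoint, hi, dif_neg (show (i : ℕ) + 1 ≠ a by omega),
      dif_neg (show ¬(i : ℕ) + 1 < a by omega), Nat.add_sub_cancel, Fin.eta,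
      Fin.val_succAbove_eq_ite]
    split_ifs <;> rfl

end insertPoint

section extFun

variable {k n : ℕ} {α : Fin k → Fin n} {q : Fin (k + 1)} {x : Fin n}

lemma StrictMono.lt_of_extFun_lt (hα : StrictMono α) (h : extFun α q < (x : ℕ) + 1)
    (j : Fin k) (hj : j.castSucc < q) : α j < x := by
  rw [Fin.lt_def, Fin.val_castSucc] at hj
  have hq : (q : ℕ) - 1 < k := by omega
  have hprev : α ⟨q - 1, hq⟩ < x := by
    simp only [extFun, dif_neg (show (q : ℕ) ≠ 0 by omega),
      dif_pos (show (q : ℕ) ≤ k by omega)] at h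
    exact Fin.lt_def.2 (by omega)
  exact (hα.monotone (Fin.le_def.2 (by dsimp; omega))).trans_lt hprev

lemma StrictMono.lt_of_lt_extFun_succ (hα : StrictMono α) (h : (x : ℕ) + 1 < extFun α (q + 1))
    (j : Fin k) (hj : q ≤ j.castSucc) : x < α j := by
  rw [Fin.le_def, Fin.val_castSucc] at hj
  have hq : (q : ℕ) < k := by omega
  have hnext : x < α ⟨q, hq⟩ := by
    simp only [extFun, dif_neg (show (q : ℕ) + 1 ≠ 0 by omega),
      dif_pos (show (q : ℕ) + 1 ≤ k by omega), Nat.add_sub_cancel] at h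
    exact Fin.lt_def.2 (by omega)
  exact hnext.trans_le (hα.monotone (Fin.le_def.2 hj))

lemma StrictMono.insertNth_of_extFun (hα : StrictMono α) (hlo : extFun α q < (x : ℕ) + 1)
    (hhi : (x : ℕ) + 1 < extFun α (q + 1)) : StrictMono (q.insertNth x α) :=
  (Fin.strictMono_insertNth_iff q x α).2
    ⟨hα, hα.lt_of_extFun_lt hlo, hα.lt_of_lt_extFun_succ hhi⟩

end extFun

-- The region condition that `MeshOcc` forbids for the boxes `p ∈ R`.
def InBox {k n : ℕ} (α β : Fin k → Fin n) (ω : Equiv.Perm (Fin n)) (p : ℕ × ℕ) (x : Fin n) :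
    Prop :=
  extFun α p.1 < (x : ℕ) + 1 ∧ (x : ℕ) + 1 < extFun α (p.1 + 1) ∧
    extFun β p.2 < (ω x : ℕ) + 1 ∧ (ω x : ℕ) + 1 < extFun β (p.2 + 1)

section Occurrence

variable {m n : ℕ} {σ : Equiv.Perm (Fin m)} {ω : Equiv.Perm (Fin n)}

lemma containsPat_insertPoint_of_inBox {α β : Fin m → Fin n} (hα : StrictMono α)
    (hβ : StrictMono β) (hαβ : ∀ i, ω (α i) = β (σ i)) {a b : Fin (m + 1)} {x : Fin n}
    (hx : InBox α β ω (a, b) x) : ContainsPat (insertPoint σ a b) ω := by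
  obtain ⟨hxlo, hxhi, hylo, hyhi⟩ := hx
  have hcomm : ∀ i, ω ((a.insertNth x α : Fin (m + 1) → Fin n) i) =
      (b.insertNth (ω x) β : Fin (m + 1) → Fin n) (insertPoint σ a b i) := by
    intro i
    cases i using Fin.succAboveCases a <;> simp [hαβ]
  refine ⟨a.insertNth x α, hα.insertNth_of_extFun hxlo hxhi, fun i j => ?_⟩
  rw [hcomm, hcomm, (hβ.insertNth_of_extFun hylo hyhi).lt_iff_lt]

lemma ContainsMesh.union_singleton_or_containsPat_insertPoint {R : Finset (ℕ × ℕ)}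
    (h : ContainsMesh σ R ω) (a b : Fin (m + 1)) :
    ContainsMesh σ (R ∪ {((a : ℕ), (b : ℕ))}) ω ∨ ContainsPat (insertPoint σ a b) ω := by
  obtain ⟨α, β, hα, hβ, hαβ, hempty⟩ := h
  by_cases hbox : ∃ x, InBox α β ω (a, b) x
  · obtain ⟨x, hx⟩ := hbox
    exact Or.inr (containsPat_insertPoint_of_inBox hα hβ hαβ hx)
  · refine Or.inl ⟨α, β, hα, hβ, hαβ, fun p hp x hx => ?_⟩
    rcases Finset.mem_union.1 hp with hp | hp
    · exact hempty p hp x hx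
    · rw [Finset.mem_singleton.1 hp] at hx
      exact hbox ⟨x, hx⟩

end Occurrence

theorem first_dominating_pattern_rule_general {l m : ℕ}
    (π : Equiv.Perm (Fin l)) (σ : Equiv.Perm (Fin m))
    (R₁ R₂ : Finset (ℕ × ℕ)) (a b : Fin (m + 1))
    (hR : R₂ = R₁ ∪ {((a : ℕ), (b : ℕ))})
    (hcont : ContainsPat (⇑π) (insertPoint σ a b)) :
    ∀ {n : ℕ} (ω : Equiv.Perm (Fin n)),
      (¬ ContainsPat (⇑π) (⇑ω) ∧ AvoidsMesh σ R₁ ω) ↔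
        (¬ ContainsPat (⇑π) (⇑ω) ∧ AvoidsMesh σ R₂ ω) := by
  intro n ω
  refine and_congr_right fun hπ => not_congr
    ⟨fun h => ?_, ContainsMesh.mono (hR ▸ Finset.subset_union_left)⟩
  rcases h.union_singleton_or_containsPat_insertPoint a b with h | h
  · exact hR ▸ h
  · exact absurd (hcont.trans h) hπ

/-- First Dominating Pattern Rule. -/
theorem first_dominating_pattern_rule {l m : ℕ}
    (π : Equiv.Perm (Fin l)) (σ : Equiv.Perm (Fin m))
    (R₁ R₂ : Finset (ℕ × ℕ)) (a b : Fin (m + 1))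
    (hlen : l ≤ m + 1)
    (hR : R₂ = R₁ ∪ {((a : ℕ), (b : ℕ))})
    (hcont : ContainsPat (⇑π) (insertPoint σ a b)) :
    ∀ {n : ℕ} (ω : Equiv.Perm (Fin n)),
      (¬ ContainsPat (⇑π) (⇑ω) ∧ AvoidsMesh σ R₁ ω) ↔
        (¬ ContainsPat (⇑π) (⇑ω) ∧ AvoidsMesh σ R₂ ω) :=
  first_dominating_pattern_rule_general π σ R₁ R₂ a b hR hcont
end

section
/- The number of permutations of length n avoiding both 231 and the mesh pattern (1, {⟨0,1⟩,⟨1,0⟩}) is the n-th Fine number; its generating function F(x) satisfies F(x) = 1 + x·F(x)·(C(x) − 1), where C(x) = 1 + x·C(x)² is the Catalan generating function. The sequence begins 1, 0, 1, 2, 6, 18, 57, 186, 622, … . -/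
/-- The number of permutations of length `n` avoiding 231 and the mesh pattern
`(1, {⟨0,1⟩,⟨1,0⟩})`. -/
noncomputable def fineCount (n : ℕ) : ℕ :=
  Nat.card {π : Equiv.Perm (Fin n) // Avoids231 π ∧
    AvoidsMesh (1 : Equiv.Perm (Fin 1)) ({(0,1),(1,0)} : Finset (ℕ × ℕ)) π}

/-!
Let `π` avoid 231 with its maximum `n` at position `a`. An entry left of the maximum that exceeds
one right of it would form a 231 with the maximum, so `π` is `σ, n, τ + a` with `σ` and `τ`
arbitrary 231-avoiders of lengths `a` and `n - a`; hence 231-avoiders are counted by the Catalan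
numbers. The mesh pattern occurs exactly at an entry larger than everything before it and smaller
than everything after it. In `σ, n, τ + a` such an entry is one of `σ` or, when `τ` is empty, the
maximum. So the permutations counted by `fineCount (n + 1)` are the `σ, n, τ + a` with `σ` counted
by `fineCount a` and `τ` a nonempty 231-avoider, which is `F = 1 + x F (C - 1)`.
-/

open Equiv Finset

/-- Such an entry `π m` is necessarily equal to `m`: these are the strong fixed points of `π`. -/
def HasStrongFixedPoint {n : ℕ} (π : Perm (Fin n)) : Prop :=
  ∃ m, (∀ i < m, π i < π m) ∧ ∀ i, m < i → π m < π i

abbrev Av231 (m : ℕ) := {σ : Perm (Fin m) // Avoids231 σ}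

section Mesh

variable {n : ℕ}

lemma extFun_zero {k : ℕ} (α : Fin k → Fin n) : extFun α 0 = 0 := rfl

lemma extFun_one (α : Fin 1 → Fin n) : extFun α 1 = α 0 + 1 := rfl

lemma extFun_two (α : Fin 1 → Fin n) : extFun α 2 = n + 1 := rfl

lemma meshOcc_iff (π : Perm (Fin n)) (α β : Fin 1 → Fin n) :
    MeshOcc (1 : Perm (Fin 1)) {(0, 1), (1, 0)} π α β ↔
      β 0 = π (α 0) ∧ (∀ i < α 0, π i < π (α 0)) ∧ ∀ i, α 0 < i → π (α 0) < π i := by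
  have hβ : (∀ i, π (α i) = β ((1 : Perm (Fin 1)) i)) ↔ β 0 = π (α 0) := by
    simp [Fin.forall_fin_one, eq_comm]
  simp only [MeshOcc, Subsingleton.strictMono, hβ, Finset.mem_insert, Finset.mem_singleton,
    forall_eq_or_imp, forall_eq, zero_add, Nat.reduceAdd, extFun_zero, extFun_one, extFun_two,
    true_and]
  refine and_congr_right fun hβ0 => ?_
  rw [hβ0]
  refine and_congr (forall_congr' fun x => ?_) (forall_congr' fun x => ?_) <;>
  · have hinj : (π x : ℕ) = π (α 0) → (x : ℕ) = α 0 := fun h =>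
      congrArg Fin.val (π.injective (Fin.ext h))
    have := (π x).isLt
    simp only [Fin.lt_def]
    omega

theorem containsMesh_iff_hasStrongFixedPoint (π : Perm (Fin n)) :
    ContainsMesh (1 : Perm (Fin 1)) {(0, 1), (1, 0)} π ↔ HasStrongFixedPoint π := by
  constructor
  · rintro ⟨α, β, hocc⟩
    exact ⟨α 0, ((meshOcc_iff π α β).1 hocc).2⟩
  · rintro ⟨m, hm⟩
    exact ⟨fun _ => m, fun _ => π m, (meshOcc_iff π _ _).2 ⟨rfl, hm⟩⟩

end Mesh

theorem Avoids231.of_embedding {m n : ℕ} {π : Perm (Fin n)} (hπ : Avoids231 π) {ρ : Perm (Fin m)}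
    {f g : Fin m → Fin n} (hf : StrictMono f) (hg : StrictMono g) (hfg : ∀ x, π (f x) = g (ρ x)) :
    Avoids231 ρ := by
  rintro ⟨i, j, k, hij, hjk, hki, hij'⟩
  refine hπ ⟨f i, f j, f k, hf hij, hf hjk, ?_, ?_⟩ <;> simp only [hfg, hg.lt_iff_lt] <;> assumption

section JoinAtMax

variable {n : ℕ}

/-- `σ`, then the maximum `n` at position `a`, then `τ` shifted up by `a`. -/
def joinAtMaxFun (a : Fin (n + 1)) (σ : Perm (Fin a)) (τ : Perm (Fin (n - a))) (i : Fin (n + 1)) :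
    Fin (n + 1) :=
  if h : (i : ℕ) < a then ⟨σ ⟨i, h⟩, by have := (σ ⟨i, h⟩).isLt; omega⟩
  else if h' : (i : ℕ) = a then Fin.last n
  else
    have hi : (i : ℕ) - a - 1 < n - a := by omega
    ⟨a + τ ⟨i - a - 1, hi⟩, by have := (τ ⟨i - a - 1, hi⟩).isLt; omega⟩

variable {a : Fin (n + 1)} {σ : Perm (Fin a)} {τ : Perm (Fin (n - a))}

lemma joinAtMaxFun_of_lt {i : Fin (n + 1)} (h : (i : ℕ) < a) :
    (joinAtMaxFun a σ τ i : ℕ) = σ ⟨i, h⟩ := by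
  simp [joinAtMaxFun, h]

lemma joinAtMaxFun_of_eq {i : Fin (n + 1)} (h : (i : ℕ) = a) :
    joinAtMaxFun a σ τ i = Fin.last n := by
  simp [joinAtMaxFun, h]

lemma joinAtMaxFun_of_gt {i : Fin (n + 1)} (h : (a : ℕ) < i) :
    (joinAtMaxFun a σ τ i : ℕ) = a + τ ⟨i - a - 1, by omega⟩ := by
  simp [joinAtMaxFun, h.not_gt, h.ne']

lemma joinAtMaxFun_add_one_add (y : Fin (n - a)) :
    (joinAtMaxFun a σ τ ⟨a + 1 + y, by omega⟩ : ℕ) = a + τ y := by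
  rw [joinAtMaxFun_of_gt (by simp only; omega)]
  simp only [show (a : ℕ) + 1 + y - a - 1 = y by omega]

lemma joinAtMaxFun_injective : Function.Injective (joinAtMaxFun a σ τ) := by
  intro i j h
  have hv := congrArg Fin.val h
  rcases lt_trichotomy (i : ℕ) a with hi | hi | hi <;>
    rcases lt_trichotomy (j : ℕ) a with hj | hj | hj <;>
    simp only [joinAtMaxFun_of_lt, joinAtMaxFun_of_eq, joinAtMaxFun_of_gt, hi, hj,
      Fin.val_last] at hv
  all_goals first
    | exact Fin.ext (by omega)
    | exact Fin.ext (Fin.mk.inj_iff.mp (σ.injective (Fin.ext hv)))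
    | have := Fin.mk.inj_iff.mp (τ.injective (Fin.ext (Nat.add_left_cancel hv))); omega

noncomputable def joinAtMax (a : Fin (n + 1)) (σ : Perm (Fin a)) (τ : Perm (Fin (n - a))) :
    Perm (Fin (n + 1)) :=
  ofBijective _ (Finite.injective_iff_bijective.mp (joinAtMaxFun_injective (σ := σ) (τ := τ)))

@[simp]
lemma joinAtMax_apply (i : Fin (n + 1)) : joinAtMax a σ τ i = joinAtMaxFun a σ τ i := rfl

lemma joinAtMax_apply_self : joinAtMax a σ τ a = Fin.last n := joinAtMaxFun_of_eq rfl

theorem avoids231_joinAtMax (hσ : Avoids231 σ) (hτ : Avoids231 τ) :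
    Avoids231 (joinAtMax a σ τ) := by
  rintro ⟨i, j, k, hij, hjk, hki, hij'⟩
  simp only [Fin.lt_def, joinAtMax_apply] at *
  rcases lt_trichotomy (k : ℕ) a with hk | hk | hk
  · have hi : (i : ℕ) < a := by omega
    have hj : (j : ℕ) < a := by omega
    rw [joinAtMaxFun_of_lt hk, joinAtMaxFun_of_lt hi] at hki
    rw [joinAtMaxFun_of_lt hi, joinAtMaxFun_of_lt hj] at hij'
    exact hσ ⟨⟨i, hi⟩, ⟨j, hj⟩, ⟨k, hk⟩, hij, hjk, hki, hij'⟩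
  · rw [joinAtMaxFun_of_eq hk, Fin.val_last] at hki
    omega
  · rcases lt_trichotomy (i : ℕ) a with hi | hi | hi
    · rw [joinAtMaxFun_of_lt hi, joinAtMaxFun_of_gt hk] at hki
      omega
    · rw [joinAtMaxFun_of_eq hi, Fin.val_last] at hij'
      omega
    · have hj : (a : ℕ) < j := by omega
      rw [joinAtMaxFun_of_gt hk, joinAtMaxFun_of_gt hi] at hki
      rw [joinAtMaxFun_of_gt hi, joinAtMaxFun_of_gt hj] at hij'
      exact hτ ⟨_, _, _, Fin.mk_lt_mk.mpr (by omega : (i : ℕ) - a - 1 < j - a - 1),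
        Fin.mk_lt_mk.mpr (by omega : (j : ℕ) - a - 1 < k - a - 1), by omega, by omega⟩

theorem hasStrongFixedPoint_joinAtMax_iff :
    HasStrongFixedPoint (joinAtMax a σ τ) ↔ HasStrongFixedPoint σ ∨ (a : ℕ) = n := by
  simp only [HasStrongFixedPoint, Fin.lt_def, joinAtMax_apply]
  constructor
  · rintro ⟨m, hl, hr⟩
    rcases lt_trichotomy (m : ℕ) a with hm | hm | hm
    · refine Or.inl ⟨⟨m, hm⟩, fun i hi => ?_, fun i hi => ?_⟩
      · have := hl ⟨i, by omega⟩ hi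
        rwa [joinAtMaxFun_of_lt (i := ⟨i, _⟩) (by exact i.isLt), joinAtMaxFun_of_lt hm] at this
      · have := hr ⟨i, by omega⟩ hi
        rwa [joinAtMaxFun_of_lt (i := ⟨i, _⟩) (by exact i.isLt), joinAtMaxFun_of_lt hm] at this
    · refine Or.inr (by_contra fun hn => ?_)
      have := hr ⟨a + 1, by omega⟩ (by simp only; omega)
      rw [joinAtMaxFun_of_eq hm, joinAtMaxFun_of_gt (by simp only; omega), Fin.val_last] at this
      omega
    · have := hl a hm
      rw [joinAtMaxFun_of_eq rfl, Fin.val_last] at this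
      omega
  · rintro (⟨m, hl, hr⟩ | han)
    · refine ⟨⟨m, by omega⟩, fun i hi => ?_, fun i hi => ?_⟩
      · have hia : (i : ℕ) < a := by simp only at hi; omega
        rw [joinAtMaxFun_of_lt hia, joinAtMaxFun_of_lt (i := ⟨m, _⟩) (by exact m.isLt)]
        exact hl ⟨i, hia⟩ hi
      · rw [joinAtMaxFun_of_lt (i := ⟨m, _⟩) (by exact m.isLt)]
        rcases lt_trichotomy (i : ℕ) a with hia | hia | hia
        · rw [joinAtMaxFun_of_lt hia]
          exact hr ⟨i, hia⟩ hi
        · rw [joinAtMaxFun_of_eq hia, Fin.val_last]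
          omega
        · rw [joinAtMaxFun_of_gt hia]
          omega
    · refine ⟨a, fun i hi => ?_, fun i hi => by omega⟩
      rw [joinAtMaxFun_of_eq rfl, joinAtMaxFun_of_lt hi, Fin.val_last]
      omega

end JoinAtMax

section Decomposition

variable {n : ℕ} {π : Perm (Fin (n + 1))} {a : Fin (n + 1)}

lemma Avoids231.lt_of_lt_of_gt (hπ : Avoids231 π) (ha : π a = Fin.last n) {i k : Fin (n + 1)}
    (hi : i < a) (hk : a < k) : π i < π k := by
  refine lt_of_not_ge fun hki => hπ ⟨i, a, k, hi, hk, lt_of_le_of_ne hki ?_, ?_⟩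
  · exact fun h => (hi.trans hk).ne' (π.injective h)
  · rw [ha, Fin.lt_last_iff_ne_last, ← ha]
    exact fun h => hi.ne (π.injective h)

/-- Every value at most `π i` sits left of the maximum, so there are at most `a` of them. -/
lemma Avoids231.val_lt_of_lt (hπ : Avoids231 π) (ha : π a = Fin.last n) :
    ∀ i < a, (π i : ℕ) < a := by
  intro i hi
  have hleft : ∀ k, π k ≤ π i → k < a := by
    refine fun k hk => lt_of_not_ge fun hak => hak.eq_or_lt.elim (fun h => ?_) fun h => ?_
    · subst h
      exact hi.ne (π.injective ((Fin.last_le_iff.mp (ha ▸ hk)).trans ha.symm))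
    · exact (hπ.lt_of_lt_of_gt ha hi h).not_ge hk
  have hsub : (Iic (π i)).image π.symm ⊆ Iio a := by
    intro k hk
    obtain ⟨v, hv, rfl⟩ := mem_image.mp hk
    exact mem_Iio.mpr (hleft _ (by simpa using hv))
  have := card_le_card hsub
  rw [card_image_of_injective _ π.symm.injective, Fin.card_Iic, Fin.card_Iio] at this
  omega

/-- Every value at least `π k` sits at or right of the maximum, so there are at most `n + 1 - a`
of them. -/
lemma Avoids231.le_val_lt_of_gt (hπ : Avoids231 π) (ha : π a = Fin.last n) :
    ∀ k, a < k → (a : ℕ) ≤ π k ∧ (π k : ℕ) < n := by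
  intro k hk
  refine ⟨?_, Fin.val_lt_last fun h => hk.ne' (π.injective (h.trans ha.symm))⟩
  have hright : ∀ j, π k ≤ π j → a ≤ j :=
    fun j hj => le_of_not_gt fun hja => (hπ.lt_of_lt_of_gt ha hja hk).not_ge hj
  have hsub : (Ici (π k)).image π.symm ⊆ Ici a := by
    intro j hj
    obtain ⟨v, hv, rfl⟩ := mem_image.mp hj
    exact mem_Ici.mpr (hright _ (by simpa using hv))
  have := card_le_card hsub
  rw [card_image_of_injective _ π.symm.injective, Fin.card_Ici, Fin.card_Ici] at this
  omega

noncomputable def leftPart (π : Perm (Fin (n + 1))) (a : Fin (n + 1))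
    (h : ∀ i < a, (π i : ℕ) < a) : Perm (Fin a) :=
  ofBijective (fun x => ⟨π ⟨x, by omega⟩, h _ (Fin.lt_def.mpr x.isLt)⟩) <|
    Finite.injective_iff_bijective.mp fun x y hxy =>
      Fin.ext (Fin.mk.inj_iff.mp (π.injective (Fin.ext (Fin.mk.inj_iff.mp hxy))))

noncomputable def rightPart (π : Perm (Fin (n + 1))) (a : Fin (n + 1))
    (h : ∀ k, a < k → (a : ℕ) ≤ π k ∧ (π k : ℕ) < n) : Perm (Fin (n - a)) :=
  ofBijective (fun y => ⟨π ⟨a + 1 + y, by omega⟩ - a,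
      by have := h ⟨a + 1 + y, by omega⟩ (Fin.lt_def.mpr (by simp only; omega)); omega⟩) <|
    Finite.injective_iff_bijective.mp fun x y hxy => by
      have hx := h ⟨a + 1 + x, by omega⟩ (Fin.lt_def.mpr (by simp only; omega))
      have hy := h ⟨a + 1 + y, by omega⟩ (Fin.lt_def.mpr (by simp only; omega))
      have hv := Fin.mk.inj_iff.mp hxy
      have := Fin.mk.inj_iff.mp (π.injective (Fin.ext (by omega) :
        π ⟨a + 1 + x, by omega⟩ = π ⟨a + 1 + y, by omega⟩))
      exact Fin.ext (by omega)

end Decomposition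

section Split

variable {n : ℕ} {a : Fin (n + 1)}

lemma joinAtMax_leftPart_rightPart {π : Perm (Fin (n + 1))} (ha : π a = Fin.last n)
    (hl : ∀ i < a, (π i : ℕ) < a) (hr : ∀ k, a < k → (a : ℕ) ≤ π k ∧ (π k : ℕ) < n) :
    joinAtMax a (leftPart π a hl) (rightPart π a hr) = π := by
  ext i
  simp only [joinAtMax_apply]
  rcases lt_trichotomy (i : ℕ) a with h | h | h
  · simp [joinAtMaxFun_of_lt h, leftPart]
  · rw [joinAtMaxFun_of_eq h, ← ha, Fin.ext h]
  · have := hr i h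
    simp only [joinAtMaxFun_of_gt h, rightPart, ofBijective_apply,
      show (a : ℕ) + 1 + (i - a - 1) = i by omega, Fin.eta]
    omega

lemma leftPart_joinAtMax {σ : Perm (Fin a)} {τ : Perm (Fin (n - a))}
    (h : ∀ i < a, (joinAtMax a σ τ i : ℕ) < a) : leftPart (joinAtMax a σ τ) a h = σ := by
  ext x
  simp [leftPart, joinAtMaxFun_of_lt]

lemma rightPart_joinAtMax {σ : Perm (Fin a)} {τ : Perm (Fin (n - a))}
    (h : ∀ k, a < k → (a : ℕ) ≤ joinAtMax a σ τ k ∧ (joinAtMax a σ τ k : ℕ) < n) :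
    rightPart (joinAtMax a σ τ) a h = τ := by
  ext y
  simp [rightPart, joinAtMaxFun_add_one_add]

lemma avoids231_leftPart {π : Perm (Fin (n + 1))} (hπ : Avoids231 π)
    (h : ∀ i < a, (π i : ℕ) < a) : Avoids231 (leftPart π a h) :=
  hπ.of_embedding (f := fun x => ⟨x, by omega⟩) (g := fun x => ⟨x, by omega⟩)
    (fun _ _ hxy => hxy) (fun _ _ hxy => hxy) fun _ => rfl

lemma avoids231_rightPart {π : Perm (Fin (n + 1))} (hπ : Avoids231 π)
    (h : ∀ k, a < k → (a : ℕ) ≤ π k ∧ (π k : ℕ) < n) : Avoids231 (rightPart π a h) :=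
  hπ.of_embedding (f := fun y => ⟨a + 1 + y, by omega⟩) (g := fun y => ⟨a + y, by omega⟩)
    (fun _ _ hxy => Nat.add_lt_add_left hxy _) (fun _ _ hxy => Nat.add_lt_add_left hxy _)
    fun y => Fin.ext <| by
      have := h ⟨a + 1 + y, by omega⟩ (Fin.lt_def.mpr (by simp only; omega))
      simp only [rightPart, ofBijective_apply]
      omega

end Split

noncomputable def splitAtMax {n : ℕ} (a : Fin (n + 1)) :
    {π : Av231 (n + 1) // π.1.symm (Fin.last n) = a} ≃ Av231 a × Av231 (n - a) where
  toFun π :=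
    have ha : π.1.1 a = Fin.last n := (π.1.1.symm_apply_eq.mp π.2).symm
    (⟨leftPart π.1.1 a (π.1.2.val_lt_of_lt ha), avoids231_leftPart π.1.2 _⟩,
      ⟨rightPart π.1.1 a (π.1.2.le_val_lt_of_gt ha), avoids231_rightPart π.1.2 _⟩)
  invFun p := ⟨⟨joinAtMax a p.1 p.2, avoids231_joinAtMax p.1.2 p.2.2⟩,
    (Equiv.symm_apply_eq _).mpr joinAtMax_apply_self.symm⟩
  left_inv π := by
    have ha : π.1.1 a = Fin.last n := (π.1.1.symm_apply_eq.mp π.2).symm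
    exact Subtype.ext <| Subtype.ext <|
      joinAtMax_leftPart_rightPart ha (π.1.2.val_lt_of_lt ha) (π.1.2.le_val_lt_of_gt ha)
  right_inv p := by
    have hπ := avoids231_joinAtMax p.1.2 p.2.2
    exact Prod.ext (Subtype.ext (leftPart_joinAtMax (hπ.val_lt_of_lt joinAtMax_apply_self)))
      (Subtype.ext (rightPart_joinAtMax (hπ.le_val_lt_of_gt joinAtMax_apply_self)))

section Counting

variable {n : ℕ}

noncomputable def joinEquiv (n : ℕ) :
    (Σ a : Fin (n + 1), Av231 a × Av231 (n - a)) ≃ Av231 (n + 1) :=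
  (sigmaCongrRight fun a => (splitAtMax a).symm).trans (sigmaFiberEquiv _)

theorem card_subtype_av231_succ (P : Perm (Fin (n + 1)) → Prop) :
    Nat.card {π : Av231 (n + 1) // P π} =
      ∑ a : Fin (n + 1), Nat.card {p : Av231 a × Av231 (n - a) // P (joinAtMax a p.1 p.2)} := by
  rw [← Nat.card_sigma]
  refine Nat.card_congr (((joinEquiv n).subtypeEquiv fun _ => Iff.rfl).symm.trans ?_)
  exact
    { toFun := fun q => ⟨q.1.1, q.1.2, q.2⟩
      invFun := fun q => ⟨⟨q.1, q.2.1⟩, q.2.2⟩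
      left_inv := fun _ => rfl
      right_inv := fun _ => rfl }

theorem card_av231 (m : ℕ) : Nat.card (Av231 m) = catalan m := by
  induction m using Nat.strong_induction_on with
  | _ m ih =>
    rcases m with _ | n
    · rw [catalan_zero, Nat.card_eq_one_iff_unique]
      exact ⟨inferInstance, ⟨⟨1, fun ⟨i, _⟩ => i.elim0⟩⟩⟩
    · have := card_subtype_av231_succ (n := n) fun _ => True
      simp only [Nat.card_congr (subtypeUnivEquiv fun _ => trivial), Nat.card_prod] at this
      rw [this, catalan_succ]
      exact sum_congr rfl fun a _ => by rw [ih a (by omega), ih (n - a) (by omega)]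

end Counting

lemma fineCount_eq_card (m : ℕ) :
    fineCount m = Nat.card {π : Av231 m // ¬HasStrongFixedPoint π.1} :=
  Nat.card_congr <| (subtypeEquivRight fun π =>
    and_congr_right' (not_congr (containsMesh_iff_hasStrongFixedPoint π))).trans
      (subtypeSubtypeEquivSubtypeInter _ _).symm

lemma fineCount_zero : fineCount 0 = 1 := by
  rw [fineCount_eq_card]
  exact Nat.card_eq_one_iff_unique.mpr
    ⟨inferInstance, ⟨⟨⟨1, fun ⟨i, _⟩ => i.elim0⟩, fun ⟨i, _⟩ => i.elim0⟩⟩⟩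

theorem fineCount_succ (n : ℕ) :
    fineCount (n + 1) =
      ∑ a : Fin (n + 1), fineCount a * if (a : ℕ) = n then 0 else catalan (n - a) := by
  rw [fineCount_eq_card, card_subtype_av231_succ fun π => ¬HasStrongFixedPoint π]
  refine sum_congr rfl fun a _ => ?_
  simp only [hasStrongFixedPoint_joinAtMax_iff, not_or]
  rw [Nat.card_congr (subtypeProdEquivProd (p := fun σ : Av231 a => ¬HasStrongFixedPoint σ.1)
    (q := fun _ : Av231 (n - a) => (a : ℕ) ≠ n)), Nat.card_prod, ← fineCount_eq_card]
  split_ifs with h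
  · simp [h]
  · simp [h, card_av231]

open PowerSeries in
theorem fineCount_powerSeries :
    (PowerSeries.mk fun n => (fineCount n : ℚ)) =
      1 + X * (PowerSeries.mk fun n => (fineCount n : ℚ)) *
        ((PowerSeries.mk fun n => (catalan n : ℚ)) - 1) := by
  ext (_ | d)
  · simp [fineCount_zero]
  · rw [map_add, coeff_one, if_neg d.succ_ne_zero, zero_add, mul_assoc, coeff_succ_X_mul,
      coeff_mul, Nat.sum_antidiagonal_eq_sum_range_succ_mk, coeff_mk, fineCount_succ,
      Nat.cast_sum, ← Fin.sum_univ_eq_sum_range]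
    refine sum_congr rfl fun a _ => ?_
    by_cases h : (a : ℕ) = d
    · simp [h]
    · simp [h, show d - a ≠ 0 by omega]

/-- The counting sequence of `{231, (1, {⟨0,1⟩,⟨1,0⟩})}`-avoiders is the Fine
numbers: its generating function `F` satisfies `F = 1 + x·F·(C - 1)`, where `C`
is the Catalan generating function, and it begins 1, 0, 1, 2, 6, 18, 57, 186, 622. -/
theorem fineCount_gf :
    ((PowerSeries.mk fun n => (fineCount n : ℚ)) =
        1 + PowerSeries.X * (PowerSeries.mk fun n => (fineCount n : ℚ)) *
          ((PowerSeries.mk fun n => (catalan n : ℚ)) - 1)) ∧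
      fineCount 0 = 1 ∧ fineCount 1 = 0 ∧ fineCount 2 = 1 ∧ fineCount 3 = 2 ∧
      fineCount 4 = 6 ∧ fineCount 5 = 18 ∧ fineCount 6 = 57 ∧
      fineCount 7 = 186 ∧ fineCount 8 = 622 := by
  have hC (k : ℕ) : catalan k = (2 * k).choose k / (k + 1) := by
    rw [catalan_eq_centralBinom_div, Nat.centralBinom_eq_two_mul_choose]
  have h0 := fineCount_zero
  have h1 : fineCount 1 = 0 := by rw [fineCount_succ]; norm_num [Fin.sum_univ_succ, Nat.choose, *]
  have h2 : fineCount 2 = 1 := by rw [fineCount_succ]; norm_num [Fin.sum_univ_succ, Nat.choose, *]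
  have h3 : fineCount 3 = 2 := by rw [fineCount_succ]; norm_num [Fin.sum_univ_succ, Nat.choose, *]
  have h4 : fineCount 4 = 6 := by rw [fineCount_succ]; norm_num [Fin.sum_univ_succ, Nat.choose, *]
  have h5 : fineCount 5 = 18 := by rw [fineCount_succ]; norm_num [Fin.sum_univ_succ, Nat.choose, *]
  have h6 : fineCount 6 = 57 := by rw [fineCount_succ]; norm_num [Fin.sum_univ_succ, Nat.choose, *]
  have h7 : fineCount 7 = 186 := by rw [fineCount_succ]; norm_num [Fin.sum_univ_succ, Nat.choose, *]
  have h8 : fineCount 8 = 622 := by rw [fineCount_succ]; norm_num [Fin.sum_univ_succ, Nat.choose, *]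
  exact ⟨fineCount_powerSeries, h0, h1, h2, h3, h4, h5, h6, h7, h8⟩
end

section
/- Among 231-avoiding permutations: (a) the number of length-n permutations not starting with their maximum equals the number not ending with their maximum; (b) both equal the number not starting with their minimum; and for n ≥ 1 all three counts equal C_n − C_{n−1}. -/
open Equiv Function

section Pattern

variable {ι ι' α α' : Type*} [Preorder ι] [LinearOrder ι'] [Preorder α] [LinearOrder α']

def IsPattern231 (f : ι → α) (i j k : ι) : Prop :=
  i < j ∧ j < k ∧ f k < f i ∧ f i < f j

theorem isPattern231_iff_of_semiconj {f : ι → α} {f' : ι' → α'} {e : ι' → ι} {g : α' → α}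
    (he : StrictMono e) (hg : StrictMono g) (hf : ∀ x, f (e x) = g (f' x)) {i j k : ι'} :
    IsPattern231 f (e i) (e j) (e k) ↔ IsPattern231 f' i j k := by
  simp only [IsPattern231, hf, he.lt_iff_lt, hg.lt_iff_lt]

end Pattern

theorem Equiv.Perm.exists_semiconj {α β : Type*} [Finite α] (π : Perm β) {e g : α → β}
    (he : Injective e) (h : ∀ x, ∃ y, π (e x) = g y) :
    ∃ σ : Perm α, ∀ x, π (e x) = g (σ x) := by
  choose s hs using h
  have hs_inj : Injective s := fun x y hxy => he <| π.injective <| by rw [hs, hs, hxy]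
  exact ⟨Equiv.ofBijective s hs_inj.bijective_of_finite, hs⟩

theorem Nat.card_subtype_and_not {α : Type*} [Finite α] (p q : α → Prop) :
    Nat.card {x // p x ∧ ¬ q x} = Nat.card {x // p x} - Nat.card {x // p x ∧ q x} := by
  rw [← Nat.card_congr (Equiv.subtypeSubtypeEquivSubtypeInter p (¬ q ·)),
    ← Nat.card_congr (Equiv.subtypeSubtypeEquivSubtypeInter p q)]
  have := Fintype.ofFinite α
  classical
  simp only [Nat.card_eq_fintype_card, Fintype.card_subtype_compl]

theorem Equiv.Perm.map_Iio_eq_Iio {n : ℕ} (π : Perm (Fin n)) {m : Fin n}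
    (h : ∀ i < m, ∀ j, m ≤ j → π i < π j) :
    (Finset.Iio m).map π.toEmbedding = Finset.Iio m := by
  have hIic : ∀ i < m, Finset.Iic (π i) ⊆ (Finset.Iio m).map π.toEmbedding := by
    intro i hi v hv
    rw [Finset.mem_map_equiv, Finset.mem_Iio]
    by_contra hv'
    have := h i hi _ (not_lt.1 hv')
    rw [apply_symm_apply] at this
    exact not_le.2 this (Finset.mem_Iic.1 hv)
  refine Finset.eq_of_subset_of_card_le (fun v hv => ?_) (by simp)
  obtain ⟨i, hi, rfl⟩ := Finset.mem_map.1 hv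
  rw [Equiv.coe_toEmbedding]
  have := Finset.card_le_card (hIic i (Finset.mem_Iio.1 hi))
  simp only [Fin.card_Iic, Finset.card_map, Fin.card_Iio] at this
  exact Finset.mem_Iio.2 (Fin.lt_def.2 (by omega))

namespace Avoids231

variable {k : ℕ} (m : Fin (k + 1))

def rightPos (j : Fin (k - m)) : Fin (k + 1) := ⟨m + 1 + j, by omega⟩

def rightVal (j : Fin (k - m)) : Fin (k + 1) := ⟨m + j, by omega⟩

@[simp] theorem val_rightPos (j : Fin (k - m)) : (rightPos m j : ℕ) = m + 1 + j := rfl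

@[simp] theorem val_rightVal (j : Fin (k - m)) : (rightVal m j : ℕ) = m + j := rfl

theorem strictMono_rightPos : StrictMono (rightPos m) := fun a b h => by
  simp only [rightPos, Fin.mk_lt_mk]; omega

theorem strictMono_rightVal : StrictMono (rightVal m) := fun a b h => by
  simp only [rightVal, Fin.mk_lt_mk]; omega

theorem exists_rightPos_eq {i : Fin (k + 1)} (hi : (m : ℕ) < i) : ∃ b, rightPos m b = i :=
  ⟨⟨i - (m + 1), by omega⟩, Fin.ext (by simp; omega)⟩

theorem exists_castLE_or_eq_or_exists_rightPos (i : Fin (k + 1)) :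
    (∃ a : Fin m, Fin.castLE m.isLt.le a = i) ∨ m = i ∨ ∃ b, rightPos m b = i := by
  rcases lt_trichotomy (i : ℕ) m with hi | hi | hi
  · exact Or.inl ⟨⟨i, hi⟩, rfl⟩
  · exact Or.inr (Or.inl (Fin.ext hi.symm))
  · exact Or.inr (Or.inr (exists_rightPos_eq m hi))

/-- `σ ⊕ (1 ⊖ τ)`, with the maximum at position `m`. -/
def glueFun (σ : Perm (Fin m)) (τ : Perm (Fin (k - m))) (i : Fin (k + 1)) : Fin (k + 1) :=
  if h : (i : ℕ) < m then Fin.castLE m.isLt.le (σ ⟨i, h⟩)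
  else if h' : (i : ℕ) = m then Fin.last k
  else rightVal m (τ ⟨i - (m + 1), by omega⟩)

variable {m} {σ : Perm (Fin m)} {τ : Perm (Fin (k - m))}

theorem glueFun_castLE (a : Fin m) :
    glueFun m σ τ (Fin.castLE m.isLt.le a) = Fin.castLE m.isLt.le (σ a) := by
  simp [glueFun]

theorem glueFun_self : glueFun m σ τ m = Fin.last k := by
  simp [glueFun]

theorem glueFun_rightPos (b : Fin (k - m)) :
    glueFun m σ τ (rightPos m b) = rightVal m (τ b) := by
  have h : (⟨rightPos m b - (m + 1), by simp⟩ : Fin (k - m)) = b := Fin.ext (by simp)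
  unfold glueFun
  rw [dif_neg (by rw [val_rightPos]; omega), dif_neg (by rw [val_rightPos]; omega), h]

theorem le_glueFun_of_le {i : Fin (k + 1)} (hi : (m : ℕ) ≤ i) : (m : ℕ) ≤ glueFun m σ τ i := by
  rcases exists_castLE_or_eq_or_exists_rightPos m i with ⟨a, rfl⟩ | rfl | ⟨b, rfl⟩
  · rw [Fin.val_castLE] at hi
    exact absurd a.isLt (not_lt.2 hi)
  · rw [glueFun_self, Fin.val_last]
    omega
  · rw [glueFun_rightPos, val_rightVal]
    omega

theorem glueFun_injective : Injective (glueFun m σ τ) := by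
  intro a b hab
  rcases exists_castLE_or_eq_or_exists_rightPos m a with ⟨a, rfl⟩ | rfl | ⟨a, rfl⟩ <;>
    rcases exists_castLE_or_eq_or_exists_rightPos m b with ⟨b, rfl⟩ | rfl | ⟨b, rfl⟩ <;>
    simp only [glueFun_castLE, glueFun_self, glueFun_rightPos] at hab
  all_goals first
    | rfl
    | exact congrArg _ (σ.injective (Fin.castLE_injective _ hab))
    | exact congrArg _ (τ.injective ((strictMono_rightVal m).injective hab))
    | (simp only [Fin.ext_iff, Fin.val_castLE, Fin.val_last, val_rightVal, val_rightPos] at hab ⊢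
       omega)

variable (m) in
noncomputable def glue (σ : Perm (Fin m)) (τ : Perm (Fin (k - m))) : Perm (Fin (k + 1)) :=
  Equiv.ofBijective (glueFun m σ τ) glueFun_injective.bijective_of_finite

theorem glue_apply (i : Fin (k + 1)) : glue m σ τ i = glueFun m σ τ i := rfl

theorem glue_injective {σ' : Perm (Fin m)} {τ' : Perm (Fin (k - m))}
    (h : glue m σ τ = glue m σ' τ') : σ = σ' ∧ τ = τ' := by
  constructor <;> ext x
  · have := congrArg Fin.val (DFunLike.congr_fun h (Fin.castLE m.isLt.le x))
    simpa [glue_apply, glueFun_castLE] using this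
  · have := congrArg Fin.val (DFunLike.congr_fun h (rightPos m x))
    simpa [glue_apply, glueFun_rightPos] using this

theorem isPattern231_glue_castLE_iff {a b c : Fin m} :
    IsPattern231 (glue m σ τ) (Fin.castLE m.isLt.le a) (Fin.castLE m.isLt.le b)
      (Fin.castLE m.isLt.le c) ↔ IsPattern231 σ a b c :=
  isPattern231_iff_of_semiconj (Fin.strictMono_castLE _) (Fin.strictMono_castLE _) glueFun_castLE

theorem isPattern231_glue_rightPos_iff {a b c : Fin (k - m)} :
    IsPattern231 (glue m σ τ) (rightPos m a) (rightPos m b) (rightPos m c) ↔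
      IsPattern231 τ a b c :=
  isPattern231_iff_of_semiconj (strictMono_rightPos m) (strictMono_rightVal m) glueFun_rightPos

theorem avoids231_glue_iff : Avoids231 (glue m σ τ) ↔ Avoids231 σ ∧ Avoids231 τ := by
  refine ⟨fun h => ⟨fun ⟨a, b, c, hp⟩ => h ⟨_, _, _, isPattern231_glue_castLE_iff.2 hp⟩,
    fun ⟨a, b, c, hp⟩ => h ⟨_, _, _, isPattern231_glue_rightPos_iff.2 hp⟩⟩, ?_⟩
  rintro ⟨hσ, hτ⟩ ⟨i, j, l, hp⟩
  obtain ⟨hij, hjl, hli, hij'⟩ := id hp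
  rcases exists_castLE_or_eq_or_exists_rightPos m i with ⟨a, rfl⟩ | rfl | ⟨a, rfl⟩
  · -- `glue l < glue i < m`, so `l` and `j` lie left of `m` as well
    have hl : (l : ℕ) < m := by
      by_contra hl
      have := le_glueFun_of_le (σ := σ) (τ := τ) (not_lt.1 hl)
      rw [Fin.lt_def, glue_apply, glue_apply, glueFun_castLE, Fin.val_castLE] at hli
      omega
    obtain ⟨c, rfl⟩ : ∃ c : Fin m, Fin.castLE m.isLt.le c = l := ⟨⟨l, hl⟩, rfl⟩
    obtain ⟨b, rfl⟩ : ∃ b : Fin m, Fin.castLE m.isLt.le b = j :=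
      ⟨⟨j, lt_trans (Fin.lt_def.1 hjl) c.isLt⟩, rfl⟩
    exact hσ ⟨a, b, c, isPattern231_glue_castLE_iff.1 hp⟩
  · exact not_lt.2 (Fin.le_last _) (by simpa [glue_apply, glueFun_self] using hij')
  · rw [Fin.lt_def, val_rightPos] at hij
    rw [Fin.lt_def] at hjl
    obtain ⟨b, rfl⟩ := exists_rightPos_eq m (show (m : ℕ) < j by omega)
    obtain ⟨c, rfl⟩ := exists_rightPos_eq m (show (m : ℕ) < l by omega)
    exact hτ ⟨a, b, c, isPattern231_glue_rightPos_iff.1 hp⟩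

theorem apply_lt_apply_of_lt_of_le {π : Perm (Fin (k + 1))} (hπ : Avoids231 π)
    (hm : π m = Fin.last k) {i j : Fin (k + 1)} (hi : i < m) (hj : m ≤ j) : π i < π j := by
  have him : π i < π m := hm ▸ Fin.lt_last_iff_ne_last.2 (hm ▸ π.injective.ne hi.ne)
  rcases hj.eq_or_lt with rfl | hj
  · exact him
  by_contra h
  exact hπ ⟨i, m, j, hi, hj, lt_of_le_of_ne (not_lt.1 h) (π.injective.ne (hi.trans hj).ne'), him⟩

theorem exists_glue_eq {π : Perm (Fin (k + 1))} (hπ : Avoids231 π) (hm : π m = Fin.last k) :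
    ∃ σ τ, glue m σ τ = π := by
  have hIio := π.map_Iio_eq_Iio fun i hi j hj => apply_lt_apply_of_lt_of_le hπ hm hi hj
  have hlt_iff : ∀ i, π i < m ↔ i < m := fun i => by
    rw [← Finset.mem_Iio, ← hIio, Finset.mem_map_equiv, symm_apply_apply, Finset.mem_Iio]
  have hlt_last : ∀ i, i ≠ m → π i < Fin.last k := fun i hi =>
    Fin.lt_last_iff_ne_last.2 (hm ▸ π.injective.ne hi)
  obtain ⟨σ, hσ⟩ := π.exists_semiconj (Fin.castLE_injective m.isLt.le)
    (g := Fin.castLE m.isLt.le) fun a =>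
      ⟨⟨π (Fin.castLE _ a), (hlt_iff _).2 (Fin.lt_def.2 (by simp))⟩, rfl⟩
  obtain ⟨τ, hτ⟩ := π.exists_semiconj (strictMono_rightPos m).injective (g := rightVal m)
    fun b => by
      have h₁ := (hlt_iff (rightPos m b)).not.2 (by rw [Fin.lt_def, val_rightPos]; omega)
      have h₂ := hlt_last (rightPos m b) (by rw [Ne, Fin.ext_iff, val_rightPos]; omega)
      rw [not_lt, Fin.le_def] at h₁
      rw [Fin.lt_def, Fin.val_last] at h₂
      exact ⟨⟨π (rightPos m b) - m, by omega⟩, Fin.ext (by simp; omega)⟩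
  refine ⟨σ, τ, Equiv.ext fun i => ?_⟩
  rcases exists_castLE_or_eq_or_exists_rightPos m i with ⟨a, rfl⟩ | rfl | ⟨b, rfl⟩
  · rw [glue_apply, glueFun_castLE, hσ]
  · rw [glue_apply, glueFun_self, hm]
  · rw [glue_apply, glueFun_rightPos, hτ]

variable (m) in
theorem card_apply_eq_last :
    Nat.card {π : Perm (Fin (k + 1)) // Avoids231 π ∧ π m = Fin.last k} =
      Nat.card {σ : Perm (Fin m) // Avoids231 σ} *
        Nat.card {τ : Perm (Fin (k - m)) // Avoids231 τ} := by
  rw [← Nat.card_prod]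
  refine (Nat.card_eq_of_bijective (fun p => ⟨glue m p.1 p.2,
    avoids231_glue_iff.2 ⟨p.1.2, p.2.2⟩, by rw [glue_apply, glueFun_self]⟩) ⟨?_, ?_⟩).symm
  · rintro ⟨σ, τ⟩ ⟨σ', τ'⟩ h
    obtain ⟨hσ, hτ⟩ := glue_injective (congrArg Subtype.val h)
    exact Prod.ext (Subtype.ext hσ) (Subtype.ext hτ)
  · rintro ⟨π, hπ, hm⟩
    obtain ⟨σ, τ, rfl⟩ := exists_glue_eq hπ hm
    obtain ⟨hσ, hτ⟩ := avoids231_glue_iff.1 hπ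
    exact ⟨(⟨σ, hσ⟩, ⟨τ, hτ⟩), rfl⟩

theorem card_eq_sum_card_apply_eq_last (k : ℕ) :
    Nat.card {π : Perm (Fin (k + 1)) // Avoids231 π} =
      ∑ m : Fin (k + 1), Nat.card {π : Perm (Fin (k + 1)) // Avoids231 π ∧ π m = Fin.last k} := by
  rw [← Nat.card_congr (Equiv.sigmaFiberEquiv fun π : {π : Perm (Fin (k + 1)) // Avoids231 π} =>
    π.1.symm (Fin.last k)), Nat.card_sigma]
  refine Finset.sum_congr rfl fun m _ => Nat.card_congr <|
    (Equiv.subtypeSubtypeEquivSubtypeInter _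
      (fun π : Perm (Fin (k + 1)) => π.symm (Fin.last k) = m)).trans <|
      Equiv.subtypeEquivRight fun π => and_congr_right' ?_
  rw [symm_apply_eq, eq_comm]

theorem card_eq_catalan (n : ℕ) : Nat.card {π : Perm (Fin n) // Avoids231 π} = catalan n := by
  induction n using Nat.strong_induction_on with
  | _ n ih =>
    rcases n with _ | k
    · rw [catalan_zero, Nat.card_eq_one_iff_unique]
      exact ⟨inferInstance, ⟨⟨1, fun ⟨i, _⟩ => i.elim0⟩⟩⟩
    · rw [card_eq_sum_card_apply_eq_last, catalan_succ]
      refine Finset.sum_congr rfl fun m _ => ?_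
      rw [card_apply_eq_last, ih m (by omega), ih (k - m) (by omega)]

end Avoids231

namespace Equiv.Perm

def antiTranspose {n : ℕ} (π : Perm (Fin n)) : Perm (Fin n) := Fin.revPerm * π⁻¹ * Fin.revPerm

variable {n : ℕ}

theorem antiTranspose_apply (π : Perm (Fin n)) (i : Fin n) :
    π.antiTranspose i = (π⁻¹ i.rev).rev := rfl

theorem antiTranspose_involutive : Function.Involutive (@antiTranspose n) := fun π => by
  ext i
  simp [antiTranspose, Perm.mul_apply, Perm.inv_def]

theorem antiTranspose_apply_zero_eq_zero {k : ℕ} (π : Perm (Fin (k + 1))) :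
    π.antiTranspose 0 = 0 ↔ π (Fin.last k) = Fin.last k := by
  rw [antiTranspose_apply, Fin.rev_eq_iff, Fin.rev_zero, Perm.inv_eq_iff_eq, eq_comm]

end Equiv.Perm

theorem Avoids231.antiTranspose {n : ℕ} {π : Perm (Fin n)} (hπ : Avoids231 π) :
    Avoids231 π.antiTranspose := by
  rintro ⟨i, j, l, hij, hjl, hli, hij'⟩
  simp only [Perm.antiTranspose_apply, Fin.rev_lt_rev] at hli hij'
  refine hπ ⟨π⁻¹ j.rev, π⁻¹ i.rev, π⁻¹ l.rev, hij', hli, ?_, ?_⟩ <;>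
    simpa [Fin.rev_lt_rev]

theorem avoids231_antiTranspose_iff {n : ℕ} {π : Perm (Fin n)} :
    Avoids231 π.antiTranspose ↔ Avoids231 π :=
  ⟨fun h => Perm.antiTranspose_involutive π ▸ h.antiTranspose, Avoids231.antiTranspose⟩

namespace Avoids231

section Counts

variable {k : ℕ}

theorem exists_apply_gt_iff (π : Perm (Fin (k + 1))) (a : Fin (k + 1)) :
    (∃ i, π a < π i) ↔ π a ≠ Fin.last k :=
  ⟨fun ⟨i, hi⟩ h => (h ▸ hi).not_ge (Fin.le_last _),
    fun h => ⟨π.symm (Fin.last k), by rwa [apply_symm_apply, Fin.lt_last_iff_ne_last]⟩⟩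

theorem exists_apply_lt_iff (π : Perm (Fin (k + 1))) (a : Fin (k + 1)) :
    (∃ i, π i < π a) ↔ π a ≠ 0 :=
  ⟨fun ⟨i, hi⟩ h => (h ▸ hi).not_ge (Fin.zero_le _),
    fun h => ⟨π.symm 0, by rwa [apply_symm_apply, Fin.pos_iff_ne_zero]⟩⟩

theorem card_apply_zero_ne_last :
    Nat.card {π : Perm (Fin (k + 1)) // Avoids231 π ∧ π 0 ≠ Fin.last k} =
      catalan (k + 1) - catalan k := by
  rw [Nat.card_subtype_and_not, card_eq_catalan, card_apply_eq_last]
  simp [card_eq_catalan]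

theorem card_apply_last_ne_last :
    Nat.card {π : Perm (Fin (k + 1)) // Avoids231 π ∧ π (Fin.last k) ≠ Fin.last k} =
      catalan (k + 1) - catalan k := by
  rw [Nat.card_subtype_and_not, card_eq_catalan, card_apply_eq_last]
  simp [card_eq_catalan]

theorem card_apply_zero_ne_zero :
    Nat.card {π : Perm (Fin (k + 1)) // Avoids231 π ∧ π 0 ≠ 0} =
      catalan (k + 1) - catalan k := by
  have : {π : Perm (Fin (k + 1)) // Avoids231 π ∧ π (Fin.last k) = Fin.last k} ≃
      {π : Perm (Fin (k + 1)) // Avoids231 π ∧ π 0 = 0} :=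
    Equiv.subtypeEquiv (Perm.antiTranspose_involutive.toPerm _) fun π => by
      simp [avoids231_antiTranspose_iff, Perm.antiTranspose_apply_zero_eq_zero]
  rw [Nat.card_subtype_and_not, card_eq_catalan, ← Nat.card_congr this, card_apply_eq_last]
  simp [card_eq_catalan]

end Counts

end Avoids231

/-- Among 231-avoiding permutations, the number of length-`n` permutations not
starting with their maximum, not ending with their maximum, and not starting
with their minimum all agree, and for `n ≥ 1` all equal `C_n - C_{n-1}`. -/
theorem av231_three_counts_eq (n : ℕ) :
    (Nat.card {π : Equiv.Perm (Fin n) // Avoids231 π ∧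
        ∀ h : 0 < n, ∃ i : Fin n, π ⟨0, h⟩ < π i} =
      Nat.card {π : Equiv.Perm (Fin n) // Avoids231 π ∧
        ∀ h : 0 < n, ∃ i : Fin n, π ⟨n - 1, by omega⟩ < π i}) ∧
    (Nat.card {π : Equiv.Perm (Fin n) // Avoids231 π ∧
        ∀ h : 0 < n, ∃ i : Fin n, π ⟨0, h⟩ < π i} =
      Nat.card {π : Equiv.Perm (Fin n) // Avoids231 π ∧
        ∀ h : 0 < n, ∃ i : Fin n, π i < π ⟨0, h⟩}) ∧
    (1 ≤ n →
      Nat.card {π : Equiv.Perm (Fin n) // Avoids231 π ∧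
        ∀ h : 0 < n, ∃ i : Fin n, π ⟨0, h⟩ < π i} =
      catalan n - catalan (n - 1)) := by
  rcases n with _ | k
  · simp
  · simp [Avoids231.exists_apply_gt_iff, Avoids231.exists_apply_lt_iff,
      show ∀ h, (⟨k, h⟩ : Fin (k + 1)) = Fin.last k from fun _ => rfl,
      Avoids231.card_apply_zero_ne_last, Avoids231.card_apply_last_ne_last,
      Avoids231.card_apply_zero_ne_zero]
end

section
/- Let m₁ = (12, {⟨0,1⟩,⟨0,2⟩,⟨2,0⟩,⟨2,1⟩}) and m₂ = (12, {⟨0,1⟩,⟨0,2⟩,⟨1,1⟩,⟨2,0⟩,⟨2,1⟩}). A permutation avoiding 321 avoids m₁ if and only if it avoids m₂. -/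
/-- `π` avoids the classical pattern 321. -/
def Avoids321 {n : ℕ} (π : Equiv.Perm (Fin n)) : Prop :=
  ¬ ∃ i j k : Fin n, i < j ∧ j < k ∧ π j < π i ∧ π k < π j

/-!
An occurrence of `m₂` is an occurrence of `m₁` whose middle box is empty. Conversely, let `(a, b)`
be an occurrence of `m₁` with nonempty middle box and `x` its highest point. If some point between
`a` and `x` lies above `π b`, then avoiding 321 forces every point right of `x` to lie above `π x`, so
`(a, x)` is an occurrence of `m₁` whose middle box lacks `x`; otherwise `(x, b)` is an occurrence
of `m₁` with empty middle box. Induction on the size of the middle box finishes the proof.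
-/

namespace Equiv.Perm

variable {n : ℕ} (π : Perm (Fin n))

/-- `(a, b)` is an occurrence of `m₁`: the shaded boxes `⟨0,1⟩, ⟨0,2⟩` say that every point left
of `a` lies below `π a`, and `⟨2,0⟩, ⟨2,1⟩` that every point right of `b` lies above `π b`. -/
structure IsM1Occ (a b : Fin n) : Prop where
  lt : a < b
  map_lt : π a < π b
  left : ∀ x < a, π x < π a
  right : ∀ x, b < x → π b < π x

def midBox (a b : Fin n) : Finset (Fin n) :=
  {x | a < x ∧ x < b ∧ π a < π x ∧ π x < π b}

variable {π}

theorem mem_midBox {a b x : Fin n} :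
    x ∈ π.midBox a b ↔ a < x ∧ x < b ∧ π a < π x ∧ π x < π b := by
  simp [midBox]

theorem IsM1Occ.exists_midBox_ssubset (h321 : Avoids321 π) {a b : Fin n} (h : π.IsM1Occ a b)
    (hne : (π.midBox a b).Nonempty) :
    ∃ c d, π.IsM1Occ c d ∧ π.midBox c d ⊂ π.midBox a b := by
  obtain ⟨x, hx, hmax⟩ := (π.midBox a b).exists_max_image π hne
  obtain ⟨hax, hxb, hπax, hπxb⟩ := mem_midBox.1 hx
  have hxtop : ∀ z, a < z → z < b → π z < π b → π z ≤ π x := fun z haz hzb hπzb =>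
    (le_or_gt (π z) (π a)).elim (fun h => h.trans hπax.le)
      fun h => hmax z (mem_midBox.2 ⟨haz, hzb, h, hπzb⟩)
  by_cases hy : ∃ y, a < y ∧ y < x ∧ π b < π y
  · obtain ⟨y, -, hyx, hπby⟩ := hy
    refine ⟨a, x, ⟨hax, hπax, h.left, fun z hxz => ?_⟩, ?_⟩
    · by_contra! hzx
      exact h321 ⟨y, x, z, hyx, hxz, hπxb.trans hπby,
        lt_of_le_of_ne hzx (π.injective.ne hxz.ne')⟩
    · refine (Finset.ssubset_iff_of_subset fun z hz => ?_).2
        ⟨x, hx, fun h => (mem_midBox.1 h).2.1.false⟩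
      obtain ⟨haz, hzx, hπaz, hπzx⟩ := mem_midBox.1 hz
      exact mem_midBox.2 ⟨haz, hzx.trans hxb, hπaz, hπzx.trans hπxb⟩
  · push Not at hy
    have hmid : π.midBox x b = ∅ := Finset.eq_empty_of_forall_notMem fun z hz => by
      obtain ⟨hxz, hzb, hπxz, hπzb⟩ := mem_midBox.1 hz
      exact (hxtop z (hax.trans hxz) hzb hπzb).not_gt hπxz
    refine ⟨x, b, ⟨hxb, hπxb, fun z hzx => ?_, h.right⟩, hmid ▸ Finset.empty_ssubset.2 hne⟩
    rcases lt_trichotomy z a with hza | rfl | haz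
    · exact (h.left z hza).trans hπax
    · exact hπax
    · have hπzb : π z < π b := lt_of_le_of_ne (hy z haz hzx) (π.injective.ne (hzx.trans hxb).ne)
      exact lt_of_le_of_ne (hxtop z haz (hzx.trans hxb) hπzb) (π.injective.ne hzx.ne)

theorem IsM1Occ.exists_midBox_eq_empty (h321 : Avoids321 π) {a b : Fin n}
    (h : π.IsM1Occ a b) : ∃ c d, π.IsM1Occ c d ∧ π.midBox c d = ∅ := by
  induction hk : (π.midBox a b).card using Nat.strong_induction_on generalizing a b with
  | _ k ih =>
    obtain hempty | hne := (π.midBox a b).eq_empty_or_nonempty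
    · exact ⟨a, b, h, hempty⟩
    · obtain ⟨c, d, hcd, hsub⟩ := h.exists_midBox_ssubset h321 hne
      exact ih _ (hk ▸ Finset.card_lt_card hsub) hcd rfl

end Equiv.Perm

section MeshOcc

variable {n : ℕ} {π : Equiv.Perm (Fin n)}

theorem containsMesh_one_fin_two_iff {R : Finset (ℕ × ℕ)} :
    ContainsMesh (1 : Equiv.Perm (Fin 2)) R π ↔ ∃ a b, MeshOcc 1 R π ![a, b] ![π a, π b] := by
  refine ⟨fun ⟨α, β, hocc⟩ => ⟨α 0, α 1, ?_⟩, fun ⟨a, b, hocc⟩ => ⟨_, _, hocc⟩⟩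
  have hα : α = ![α 0, α 1] := by ext i; fin_cases i <;> rfl
  have hβ : β = ![π (α 0), π (α 1)] := by ext i; fin_cases i <;> simp [hocc.2.2.1]
  rwa [← hα, ← hβ]

theorem meshOcc_insert_iff {k : ℕ} {τ : Equiv.Perm (Fin k)} {R : Finset (ℕ × ℕ)} {p : ℕ × ℕ}
    {α β : Fin k → Fin n} :
    MeshOcc τ (insert p R) π α β ↔ MeshOcc τ R π α β ∧
      ∀ x : Fin n, ¬(extFun α p.1 < (x : ℕ) + 1 ∧ (x : ℕ) + 1 < extFun α (p.1 + 1) ∧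
        extFun β p.2 < (π x : ℕ) + 1 ∧ (π x : ℕ) + 1 < extFun β (p.2 + 1)) := by
  simp only [MeshOcc, Finset.forall_mem_insert]
  tauto

theorem meshOcc_m1_iff {a b : Fin n} :
    MeshOcc (1 : Equiv.Perm (Fin 2)) {(0,1),(0,2),(2,0),(2,1)} π ![a, b] ![π a, π b] ↔
      π.IsM1Occ a b := by
  have hboxes : MeshOcc (1 : Equiv.Perm (Fin 2)) {(0,1),(0,2),(2,0),(2,1)} π ![a, b]
      ![π a, π b] ↔
      a < b ∧ π a < π b ∧ (∀ x < a, ¬(π a < π x ∧ π x < π b)) ∧ (∀ x < a, ¬π b < π x) ∧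
        (∀ x, b < x → ¬π x < π a) ∧ (∀ x, b < x → ¬(π a < π x ∧ π x < π b)) := by
    simp [MeshOcc, extFun, Fin.strictMono_iff_lt_succ, fun x : Fin n => x.isLt.not_ge]
  rw [hboxes]
  constructor
  · rintro ⟨hab, hπab, h01, h02, h20, h21⟩
    refine ⟨hab, hπab, fun x hx => ?_, fun x hx => ?_⟩
    · by_contra! hax
      have hπax : π a < π x := lt_of_le_of_ne hax (π.injective.ne hx.ne')
      exact h02 x hx (lt_of_le_of_ne (not_lt.1 fun h => h01 x hx ⟨hπax, h⟩)
        (π.injective.ne (hx.trans hab).ne'))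
    · have hπax : π a < π x :=
        lt_of_le_of_ne (not_lt.1 (h20 x hx)) (π.injective.ne (hab.trans hx).ne)
      exact lt_of_le_of_ne (not_lt.1 fun h => h21 x hx ⟨hπax, h⟩) (π.injective.ne hx.ne)
  · rintro ⟨hab, hπab, hleft, hright⟩
    refine ⟨hab, hπab, fun x hx h => ?_, fun x hx h => ?_, fun x hx h => ?_, fun x hx h => ?_⟩
    · exact h.1.not_gt (hleft x hx)
    · exact h.not_gt ((hleft x hx).trans hπab)
    · exact h.not_gt (hπab.trans (hright x hx))
    · exact h.2.not_gt (hright x hx)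

theorem meshOcc_m2_iff {a b : Fin n} :
    MeshOcc (1 : Equiv.Perm (Fin 2)) {(0,1),(0,2),(1,1),(2,0),(2,1)} π ![a, b] ![π a, π b] ↔
      π.IsM1Occ a b ∧ π.midBox a b = ∅ := by
  have hR : ({(0,1),(0,2),(1,1),(2,0),(2,1)} : Finset (ℕ × ℕ)) =
      insert (1,1) {(0,1),(0,2),(2,0),(2,1)} := by decide
  rw [hR, meshOcc_insert_iff, meshOcc_m1_iff, Finset.eq_empty_iff_forall_notMem]
  simp [extFun, Equiv.Perm.mem_midBox]

end MeshOcc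

/-- Under the dominating pattern 321, the mesh patterns
`(12, {⟨0,1⟩,⟨0,2⟩,⟨2,0⟩,⟨2,1⟩})` and
`(12, {⟨0,1⟩,⟨0,2⟩,⟨1,1⟩,⟨2,0⟩,⟨2,1⟩})` are coincident. -/
theorem coincidence_321_12_patterns' {n : ℕ} (π : Equiv.Perm (Fin n))
    (h : Avoids321 π) :
    AvoidsMesh (1 : Equiv.Perm (Fin 2))
        ({(0,1),(0,2),(2,0),(2,1)} : Finset (ℕ × ℕ)) π ↔
      AvoidsMesh (1 : Equiv.Perm (Fin 2))
        ({(0,1),(0,2),(1,1),(2,0),(2,1)} : Finset (ℕ × ℕ)) π := by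
  simp only [AvoidsMesh, containsMesh_one_fin_two_iff, meshOcc_m1_iff, meshOcc_m2_iff]
  exact not_congr ⟨fun ⟨_, _, hocc⟩ => hocc.exists_midBox_eq_empty h,
    fun ⟨a, b, hocc, _⟩ => ⟨a, b, hocc⟩⟩
end
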